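/- Let f : Q → P be an integral homomorphism of fine, sharp monoids admitting a semistable structure (σ, q₀, Δ, B) over Q. Then the cokernel of the induced map of groupifications Q^gp → P^gp is torsion free. -/
import Mathlib


section SemistableMonoid

variable {Q P : Type*} [AddCommMonoid Q] [AddCommMonoid P]

/-- `T·σ = Σ_x T(x)·x` for a finitely supported `T : P →₀ ℕ`. -/
def monDot (T : P →₀ ℕ) : P := T.sum fun x n => n • x

/-- A commutative monoid is sharp if `x + y = 0` implies `x = y = 0`. -/
def MonSharp (P : Type*) [AddCommMonoid P] : Prop :=
  ∀ x y : P, x + y = 0 → x = 0 ∧ y = 0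

/-- An element `x` of a sharp monoid is irreducible if `x = y + z` implies
`y = 0` or `z = 0`. -/
def MonIrreducible (x : P) : Prop := ∀ y z : P, x = y + z → y = 0 ∨ z = 0

/-- A homomorphism of monoids `f : Q → P` is integral if whenever
`f q + p = f q' + p'` there are `q₁, q₂ ∈ Q` and `p'' ∈ P` with `q + q₁ = q' + q₂`,
`p = f q₁ + p''` and `p' = f q₂ + p''`. -/
def MonIntegralHom (f : Q →+ P) : Prop :=
  ∀ (q q' : Q) (p p' : P), f q + p = f q' + p' →
    ∃ (q₁ q₂ : Q) (p'' : P), q + q₁ = q' + q₂ ∧ p = f q₁ + p'' ∧ p' = f q₂ + p''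

/-- `f : Q → P` splits if there is a submonoid `N` of `P` with `P = f(Q) × N`. -/
def MonSplits (f : Q →+ P) : Prop :=
  ∃ N : AddSubmonoid P, Function.Bijective (fun x : Q × N => f x.1 + (x.2 : P))

/-- `P` has a semistable structure `(σ, q₀, Δ, B)` over `Q` (via `f`). -/
def IsSemistableStructure (f : Q →+ P) (σ : Finset P) (q₀ : Q) (Δ B : P →₀ ℕ) : Prop :=
  -- (S1)
  q₀ ≠ 0 ∧ Δ ≠ 0 ∧ (∀ x, Δ x ≤ 1) ∧
  ↑Δ.support ⊆ (σ : Set P) ∧ ↑B.support ⊆ (σ : Set P) ∧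
  -- (S2): `P` is generated by `σ` and `f(Q)`, and `ℕ^σ → P` is injective
  (∀ p : P, ∃ (T : P →₀ ℕ) (q : Q), ↑T.support ⊆ (σ : Set P) ∧ p = monDot T + f q) ∧
  (∀ T T' : P →₀ ℕ, ↑T.support ⊆ (σ : Set P) → ↑T'.support ⊆ (σ : Set P) →
    monDot T = monDot T' → T = T') ∧
  -- (S3)
  Disjoint Δ.support B.support ∧ monDot Δ = f q₀ + monDot B ∧
  -- (S4)
  (∀ (T T' : P →₀ ℕ) (q : Q), ↑T.support ⊆ (σ : Set P) → ↑T'.support ⊆ (σ : Set P) →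
    monDot T = f q + monDot T' → q ≠ 0 → ∀ x ∈ Δ.support, 0 < T x)

end SemistableMonoid

lemma monDot_add {P : Type*} [AddCommMonoid P] (T S : P →₀ ℕ) :
    monDot (T + S) = monDot T + monDot S := by
  classical
  exact Finsupp.sum_add_index' (fun x => zero_smul ℕ x) (fun x n m => add_smul n m x)

lemma monDot_smul {P : Type*} [AddCommMonoid P] (n : ℕ) (T : P →₀ ℕ) :
    monDot (n • T) = n • monDot T := by
  induction n with
  | zero => simp [monDot]
  | succ n ih => rw [succ_nsmul, succ_nsmul, monDot_add, ih]

lemma key_lemma {Q P : Type*} [AddCancelCommMonoid Q] [AddCancelCommMonoid P]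
    (f : Q →+ P) (hf : MonIntegralHom f)
    (σ : Finset P) (q₀ : Q) (Δ B : P →₀ ℕ)
    (hΔne : Δ ≠ 0) (hΔle : ∀ x, Δ x ≤ 1)
    (hBsupp : ↑B.support ⊆ (σ : Set P))
    (hgen : ∀ p : P, ∃ (T : P →₀ ℕ) (q : Q), ↑T.support ⊆ (σ : Set P) ∧ p = monDot T + f q)
    (hinj : ∀ T T' : P →₀ ℕ, ↑T.support ⊆ (σ : Set P) → ↑T'.support ⊆ (σ : Set P) →
      monDot T = monDot T' → T = T')
    (hdisj : Disjoint Δ.support B.support)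
    (hrel : monDot Δ = f q₀ + monDot B)
    (hS4 : ∀ (T T' : P →₀ ℕ) (q : Q), ↑T.support ⊆ (σ : Set P) → ↑T'.support ⊆ (σ : Set P) →
      monDot T = f q + monDot T' → q ≠ 0 → ∀ x ∈ Δ.support, 0 < T x) :
    ∀ (ν : ℕ) (T S : P →₀ ℕ) (q : Q), ↑T.support ⊆ (σ : Set P) → ↑S.support ⊆ (σ : Set P) →
      (∑ x ∈ Δ.support, T x) + (∑ x ∈ Δ.support, S x) ≤ ν →
      monDot T = f q + monDot S → ∃ n : ℕ, T + n • B = S + n • Δ := by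
  classical
  intro ν
  induction ν using Nat.strong_induction_on with
  | _ ν ih =>
  intro T S q hT hS hν heq
  by_cases hq : q = 0
  · subst hq
    rw [map_zero, zero_add] at heq
    exact ⟨0, by rw [hinj T S hT hS heq]; simp⟩
  · have hTpos : ∀ x ∈ Δ.support, 0 < T x := hS4 T S q hT hS heq hq
    have hΔT : Δ ≤ T := by
      rw [Finsupp.le_def]
      intro x
      by_cases hx : x ∈ Δ.support
      · exact le_trans (hΔle x) (hTpos x hx)
      · simp [Finsupp.notMem_support_iff.mp hx]
    have hsubT : (T - Δ) + Δ = T := tsub_add_cancel_of_le hΔT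
    have hTΔsupp : ↑(T - Δ).support ⊆ (σ : Set P) :=
      le_trans (Finset.coe_subset.mpr Finsupp.support_tsub) hT
    have hTΔBsupp : ↑((T - Δ) + B).support ⊆ (σ : Set P) := by
      refine subset_trans (Finset.coe_subset.mpr Finsupp.support_add) ?_
      rw [Finset.coe_union]
      exact Set.union_subset hTΔsupp hBsupp
    obtain ⟨x₀, hx₀⟩ := Finsupp.support_nonempty_iff.mpr hΔne
    have hΔx₀ : Δ x₀ = 1 :=
      le_antisymm (hΔle x₀) (Finsupp.mem_support_iff.mp hx₀ |> Nat.pos_of_ne_zero)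
    have hBΔ : ∀ x ∈ Δ.support, B x = 0 := fun x hx =>
      Finsupp.notMem_support_iff.mp (Finset.disjoint_left.mp hdisj hx)
    have h2 : f q₀ + monDot ((T - Δ) + B) = f q + monDot S := by
      rw [monDot_add]
      calc f q₀ + (monDot (T - Δ) + monDot B)
          = monDot (T - Δ) + (f q₀ + monDot B) := by abel
        _ = monDot (T - Δ) + monDot Δ := by rw [hrel]
        _ = monDot T := by rw [← monDot_add, hsubT]
        _ = f q + monDot S := heq
    obtain ⟨q₁, q₂, p'', hqq, hp1, hp2⟩ := hf q₀ q (monDot ((T - Δ) + B)) (monDot S) h2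
    obtain ⟨U, r, hU, hpU⟩ := hgen p''
    have hi : monDot ((T - Δ) + B) = f (q₁ + r) + monDot U := by
      rw [hp1, hpU, map_add]; abel
    have hii : monDot S = f (q₂ + r) + monDot U := by
      rw [hp2, hpU, map_add]; abel
    by_cases hb : q₂ + r = 0
    · have hSU : S = U := by
        apply hinj S U hS hU
        rw [hii, hb, map_zero, zero_add]
      have hlt : (∑ x ∈ Δ.support, ((T - Δ) + B) x) < ∑ x ∈ Δ.support, T x := by
        apply Finset.sum_lt_sum
        · intro x hx
          rw [Finsupp.add_apply, Finsupp.tsub_apply, hBΔ x hx]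
          omega
        · refine ⟨x₀, hx₀, ?_⟩
          rw [Finsupp.add_apply, Finsupp.tsub_apply, hBΔ x₀ hx₀, hΔx₀]
          have := hTpos x₀ hx₀
          omega
      have hmlt : (∑ x ∈ Δ.support, ((T - Δ) + B) x) + (∑ x ∈ Δ.support, S x) < ν := by
        omega
      obtain ⟨n, hn⟩ := ih _ hmlt ((T - Δ) + B) S (q₁ + r) hTΔBsupp hS le_rfl
        (by rw [hi, hSU])
      refine ⟨n + 1, ?_⟩
      ext x
      have hnx := Finsupp.ext_iff.mp hn x
      have hΔTx := Finsupp.le_def.mp hΔT x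
      simp only [Finsupp.add_apply, Finsupp.tsub_apply, succ_nsmul] at hnx ⊢
      omega
    · have hSpos : ∀ x ∈ Δ.support, 0 < S x := hS4 S U (q₂ + r) hS hU hii hb
      have hΔS : Δ ≤ S := by
        rw [Finsupp.le_def]
        intro x
        by_cases hx : x ∈ Δ.support
        · exact le_trans (hΔle x) (hSpos x hx)
        · simp [Finsupp.notMem_support_iff.mp hx]
      have hsubS : (S - Δ) + Δ = S := tsub_add_cancel_of_le hΔS
      have hSΔsupp : ↑(S - Δ).support ⊆ (σ : Set P) :=
        le_trans (Finset.coe_subset.mpr Finsupp.support_tsub) hS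
      have heq' : monDot (T - Δ) = f q + monDot (S - Δ) := by
        have h7 : monDot (T - Δ) + monDot Δ = (f q + monDot (S - Δ)) + monDot Δ := by
          rw [← monDot_add, hsubT, heq, add_assoc, ← monDot_add, hsubS]
        exact add_right_cancel h7
      have hltT : (∑ x ∈ Δ.support, (T - Δ) x) < ∑ x ∈ Δ.support, T x := by
        apply Finset.sum_lt_sum
        · intro x hx
          rw [Finsupp.tsub_apply]; omega
        · refine ⟨x₀, hx₀, ?_⟩
          rw [Finsupp.tsub_apply, hΔx₀]
          have := hTpos x₀ hx₀
          omega
      have hleS : (∑ x ∈ Δ.support, (S - Δ) x) ≤ ∑ x ∈ Δ.support, S x := by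
        apply Finset.sum_le_sum
        intro x hx
        rw [Finsupp.tsub_apply]; omega
      have hmlt : (∑ x ∈ Δ.support, (T - Δ) x) + (∑ x ∈ Δ.support, (S - Δ) x) < ν := by
        omega
      obtain ⟨n, hn⟩ := ih _ hmlt (T - Δ) (S - Δ) q hTΔsupp hSΔsupp le_rfl heq'
      refine ⟨n, ?_⟩
      ext x
      have hnx := Finsupp.ext_iff.mp hn x
      have hΔTx := Finsupp.le_def.mp hΔT x
      have hΔSx := Finsupp.le_def.mp hΔS x
      simp only [Finsupp.add_apply, Finsupp.tsub_apply] at hnx ⊢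
      omega



/-- Let `f : Q → P` be an integral homomorphism of fine, sharp monoids admitting a
semistable structure over `Q`.  Then the cokernel of `Q^gp → P^gp` is torsion free.
Since `P` and `Q` are cancellative, every element of `P^gp` is a difference
`p₁ - p₂` of elements of `P` and `P` injects into `P^gp`; torsion-freeness of the
cokernel is thus equivalent to: whenever `k > 0` and `k•p₁ - k•p₂ = f q₁ - f q₂`
in `P^gp` (i.e. `k•p₁ + f q₂ = k•p₂ + f q₁` in `P`), already
`p₁ - p₂ ∈ im (Q^gp)` (i.e. `p₁ + f q₂' = p₂ + f q₁'` for some `q₁', q₂'`). -/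
theorem semistable_coker_torsionFree
    {Q P : Type*} [AddCancelCommMonoid Q] [AddCancelCommMonoid P]
    [AddMonoid.FG Q] [AddMonoid.FG P]
    (hQ : MonSharp Q) (hP : MonSharp P)
    (f : Q →+ P) (hf : MonIntegralHom f)
    (σ : Finset P) (q₀ : Q) (Δ B : P →₀ ℕ)
    (hss : IsSemistableStructure f σ q₀ Δ B) :
    ∀ (k : ℕ), 0 < k → ∀ p₁ p₂ : P,
      (∃ q₁ q₂ : Q, k • p₁ + f q₂ = k • p₂ + f q₁) →
      ∃ q₁' q₂' : Q, p₁ + f q₂' = p₂ + f q₁' := by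
  classical
  obtain ⟨hq₀, hΔne, hΔle, hΔsupp, hBsupp, hgen, hinj, hdisj, hrel, hS4⟩ := hss
  intro k hk p₁ p₂ ⟨q₁, q₂, heq⟩
  obtain ⟨T₁, r₁, hT₁, hp₁⟩ := hgen p₁
  obtain ⟨T₂, r₂, hT₂, hp₂⟩ := hgen p₂
  have e1 : k • p₁ = monDot (k • T₁) + f (k • r₁) := by
    rw [hp₁, smul_add, monDot_smul, map_nsmul]
  have e2 : k • p₂ = monDot (k • T₂) + f (k • r₂) := by
    rw [hp₂, smul_add, monDot_smul, map_nsmul]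
  rw [e1, e2] at heq
  have h3 : f (k • r₁ + q₂) + monDot (k • T₁) = f (k • r₂ + q₁) + monDot (k • T₂) := by
    rw [map_add, map_add]
    calc f (k • r₁) + f q₂ + monDot (k • T₁)
        = monDot (k • T₁) + f (k • r₁) + f q₂ := by abel
      _ = monDot (k • T₂) + f (k • r₂) + f q₁ := heq
      _ = f (k • r₂) + f q₁ + monDot (k • T₂) := by abel
  obtain ⟨a, b, p'', hab, h4, h5⟩ := hf _ _ _ _ h3
  obtain ⟨U, r, hU, hpU⟩ := hgen p''
  have hi : monDot (k • T₁) = f (a + r) + monDot U := by rw [h4, hpU, map_add]; abel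
  have hii : monDot (k • T₂) = f (b + r) + monDot U := by rw [h5, hpU, map_add]; abel
  have hkT₁ : ↑(k • T₁).support ⊆ (σ : Set P) :=
    le_trans (Finset.coe_subset.mpr Finsupp.support_smul) hT₁
  have hkT₂ : ↑(k • T₂).support ⊆ (σ : Set P) :=
    le_trans (Finset.coe_subset.mpr Finsupp.support_smul) hT₂
  obtain ⟨n, hn⟩ := key_lemma f hf σ q₀ Δ B hΔne hΔle hBsupp hgen hinj hdisj hrel hS4
    _ (k • T₁) U (a + r) hkT₁ hU le_rfl hi
  obtain ⟨m, hm⟩ := key_lemma f hf σ q₀ Δ B hΔne hΔle hBsupp hgen hinj hdisj hrel hS4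
    _ (k • T₂) U (b + r) hkT₂ hU le_rfl hii
  obtain ⟨x₀, hx₀⟩ := Finsupp.support_nonempty_iff.mpr hΔne
  have hΔx₀ : Δ x₀ = 1 :=
    le_antisymm (hΔle x₀) (Finsupp.mem_support_iff.mp hx₀ |> Nat.pos_of_ne_zero)
  have hBx₀ : B x₀ = 0 :=
    Finsupp.notMem_support_iff.mp (Finset.disjoint_left.mp hdisj hx₀)
  -- helper: finish from a finsupp identity
  have finish : ∀ (Ta Tb : P →₀ ℕ) (ra rb : Q) (pa pb : P),
      pa = monDot Ta + f ra → pb = monDot Tb + f rb →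
      (∃ j : ℕ, Ta + j • B = Tb + j • Δ) →
      ∃ qa qb : Q, pa + f qb = pb + f qa := by
    intro Ta Tb ra rb pa pb hpa hpb ⟨j, hj⟩
    refine ⟨j • q₀ + ra, rb, ?_⟩
    have h8 : monDot Ta + j • monDot B = monDot Tb + j • monDot Δ := by
      rw [← monDot_smul, ← monDot_smul, ← monDot_add, ← monDot_add, hj]
    rw [hrel, smul_add] at h8
    have h9 : monDot Ta = monDot Tb + j • f q₀ := by
      apply add_right_cancel (b := j • monDot B)
      calc monDot Ta + j • monDot B
          = monDot Tb + (j • f q₀ + j • monDot B) := h8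
        _ = monDot Tb + j • f q₀ + j • monDot B := by abel
    rw [hpa, hpb, h9, map_add, map_nsmul]
    abel
  -- helper: derive the finsupp identity given the ordering of n and m
  have deriv : ∀ (Ta Tb : P →₀ ℕ) (na ma : ℕ),
      k • Ta + na • B = U + na • Δ → k • Tb + ma • B = U + ma • Δ → ma ≤ na →
      ∃ j : ℕ, Ta + j • B = Tb + j • Δ := by
    intro Ta Tb na ma hna hma hcmp
    have hnax₀ : k * Ta x₀ = U x₀ + na := by
      have h6 := Finsupp.ext_iff.mp hna x₀
      simp only [Finsupp.add_apply, Finsupp.smul_apply, smul_eq_mul, hBx₀, hΔx₀] at h6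
      omega
    have hmax₀ : k * Tb x₀ = U x₀ + ma := by
      have h6 := Finsupp.ext_iff.mp hma x₀
      simp only [Finsupp.add_apply, Finsupp.smul_apply, smul_eq_mul, hBx₀, hΔx₀] at h6
      omega
    have hTT : Tb x₀ ≤ Ta x₀ := by
      have h7 : k * Tb x₀ ≤ k * Ta x₀ := by omega
      exact Nat.le_of_mul_le_mul_left h7 hk
    refine ⟨Ta x₀ - Tb x₀, ?_⟩
    set j := Ta x₀ - Tb x₀ with hjdef
    have hnm : na = ma + k * j := by
      have h6 : k * j + k * Tb x₀ = k * Ta x₀ := by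
        rw [← Nat.mul_add, hjdef, Nat.sub_add_cancel hTT]
      obtain ⟨A, hA⟩ : ∃ A, A = k * j := ⟨_, rfl⟩
      obtain ⟨C, hC⟩ : ∃ C, C = k * Ta x₀ := ⟨_, rfl⟩
      obtain ⟨D, hD⟩ : ∃ D, D = k * Tb x₀ := ⟨_, rfl⟩
      rw [← hA] at h6 ⊢
      rw [← hC] at h6 hnax₀
      rw [← hD] at h6 hmax₀
      omega
    have hn' : k • Ta + (ma • B + (k * j) • B) = U + (ma • Δ + (k * j) • Δ) := by
      rw [← add_nsmul, ← add_nsmul, ← hnm]; exact hna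
    have hc : (k • Tb + ma • B) + (k • Ta + (k * j) • B)
        = (k • Tb + ma • B) + (k • Tb + (k * j) • Δ) := by
      calc (k • Tb + ma • B) + (k • Ta + (k * j) • B)
          = (k • Ta + (ma • B + (k * j) • B)) + k • Tb := by abel
        _ = (U + (ma • Δ + (k * j) • Δ)) + k • Tb := by rw [hn']
        _ = (U + ma • Δ) + ((k * j) • Δ + k • Tb) := by abel
        _ = (k • Tb + ma • B) + ((k * j) • Δ + k • Tb) := by rw [hma]
        _ = (k • Tb + ma • B) + (k • Tb + (k * j) • Δ) := by abel
    have hc2 : k • Ta + (k * j) • B = k • Tb + (k * j) • Δ := by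
      ext x
      have h6 := Finsupp.ext_iff.mp hc x
      simp only [Finsupp.add_apply] at h6 ⊢
      omega
    have hc3 : k • (Ta + j • B) = k • (Tb + j • Δ) := by
      rw [smul_add, smul_add, ← mul_smul, ← mul_smul]; exact hc2
    ext x
    have h6 := Finsupp.ext_iff.mp hc3 x
    simp only [Finsupp.smul_apply, smul_eq_mul] at h6
    exact Nat.eq_of_mul_eq_mul_left hk h6
  rcases le_total m n with hcmp | hcmp
  · exact finish T₁ T₂ r₁ r₂ p₁ p₂ hp₁ hp₂ (deriv T₁ T₂ n m hn hm hcmp)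
  · obtain ⟨qa, qb, h⟩ := finish T₂ T₁ r₂ r₁ p₂ p₁ hp₂ hp₁ (deriv T₂ T₁ m n hm hn hcmp)
    exact ⟨qb, qa, h.symm⟩
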